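/- arXiv:1205.5148 — 2 statements merged into one kernel-verified Lean document; each statement's English description precedes it below -/
import Mathlib

section
/- Let F_q be a finite field, E a field extension of F_q of degree m, and ρ : E → Mat_{m×m}(F_q) the regular representation sending a ∈ E to the matrix (with respect to a fixed F_q-basis of E) of multiplication by a; ρ is an injective F_q-linear map. Let n₁, n₂ be positive integers with n₁n₂ = n and let Φ₂ : E^n → (n₁m × n₂m matrices over F_q) be the two-dimensional expansion that writes a vector row-wise into an n₁ × n₂ array of E-symbols and replaces each symbol a by the m × m matrix ρ(a). Let 0 < k < n, assume ⌊√(⌊(n−k)/2⌋)⌋ ≥ 1, and let C ⊆ E^n have minimum Hamming distance at least n−k+1. Set x = m·(⌊√(⌊(n−k)/2⌋)⌋ − 1) + 1. Then Φ₂(C) corrects any single square burst of side at most x: for all c, c′ ∈ C and all n₁m × n₂m matrices e, e′ over F_q whose supports are each contained in some x × x square of contiguous rows and columns, Φ₂(c) + e = Φ₂(c′) + e′ implies c = c′. -/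
/-- The linear (row-major) index of position `j` in the `i`-th block of length `m`. -/
def finIdx {n m : ℕ} (i : Fin n) (j : Fin m) : Fin (n * m) :=
  ⟨i.1 * m + j.1, by
    have h1 : i.1 + 1 ≤ n := i.2
    have h2 : j.1 < m := j.2
    calc i.1 * m + j.1 < (i.1 + 1) * m := by nlinarith
      _ ≤ n * m := Nat.mul_le_mul_right m h1⟩

/-- A square burst of side (at most) `x`: a matrix whose support is contained in
some `x × x` square of contiguous rows and columns. -/
def IsSquareBurst {F : Type*} [Zero F] {R C : ℕ} (x : ℕ) (e : Matrix (Fin R) (Fin C) F) : Prop :=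
  ∃ p q : ℕ, ∀ i j, e i j ≠ 0 →
    p ≤ (i : ℕ) ∧ (i : ℕ) < p + x ∧ q ≤ (j : ℕ) ∧ (j : ℕ) < q + x

/-!
Two codewords `c ≠ c'` with `Φ₂ c + e = Φ₂ c' + e'` differ in at least `n - k + 1` symbols, and
since the regular representation is injective, every such symbol position carries a nonzero
`m × m` block of `e` or of `e'`. A window of side `m (s - 1) + 1` meets at most `s` block rows and
`s` block columns, so the two bursts cover at most `2 s² ≤ n - k` blocks, a contradiction.
-/

open Finset

theorem finIdx_divNat_modNat {n m : ℕ} (t : Fin (n * m)) : finIdx t.divNat t.modNat = t :=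
  Fin.ext (Nat.div_add_mod' t m)

theorem mem_Icc_div_of_lt_add {m p t r u : ℕ} (hu : u < m) (h₁ : p ≤ r * m + u)
    (h₂ : r * m + u < p + (m * t + 1)) : r ∈ Icc (p / m) (p / m + t) := by
  have hm : 0 < m := by omega
  refine mem_Icc.2 ⟨Nat.lt_succ_iff.1 ((Nat.div_lt_iff_lt_mul hm).2 ?_), ?_⟩
  · rw [Nat.succ_mul]
    omega
  · rw [← Nat.add_mul_div_left p t hm]
    exact (Nat.le_div_iff_mul_le hm).2 (by omega)

section Blocks

variable {F : Type*} {n₁ n₂ m : ℕ}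

open Classical in
noncomputable def blockSupport [Zero F] (e : Matrix (Fin (n₁ * m)) (Fin (n₂ * m)) F) :
    Finset (Fin n₁ × Fin n₂) :=
  {rc | ∃ u v : Fin m, e (finIdx rc.1 u) (finIdx rc.2 v) ≠ 0}

theorem card_blockSupport_le [Zero F] {t : ℕ} {e : Matrix (Fin (n₁ * m)) (Fin (n₂ * m)) F}
    (he : IsSquareBurst (m * t + 1) e) : #(blockSupport e) ≤ (t + 1) ^ 2 := by
  obtain ⟨p, q, he⟩ := he
  calc #(blockSupport e) ≤ #(Icc (p / m) (p / m + t) ×ˢ Icc (q / m) (q / m + t)) := by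
        refine card_le_card_of_injOn (Prod.map Fin.val Fin.val) (fun rc hrc => ?_)
          (Fin.val_injective.prodMap Fin.val_injective).injOn
        obtain ⟨u, v, huv⟩ : ∃ u v : Fin m, e (finIdx rc.1 u) (finIdx rc.2 v) ≠ 0 := by
          simpa [blockSupport] using hrc
        obtain ⟨h₁, h₂, h₃, h₄⟩ := he _ _ huv
        exact mem_product.2 ⟨mem_Icc_div_of_lt_add u.2 h₁ h₂, mem_Icc_div_of_lt_add v.2 h₃ h₄⟩
    _ = (t + 1) ^ 2 := by
      have hlen (a : ℕ) : a + t + 1 - a = t + 1 := by omega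
      simp [sq, hlen]

theorem hammingDist_le_card_blockSupport_union [AddZeroClass F] {E : Type*} [DecidableEq E]
    {n : ℕ} {ρ : E → Matrix (Fin m) (Fin m) F} (hρ : Function.Injective ρ) (hn : n₁ * n₂ = n)
    {Φ : (Fin n → E) → Matrix (Fin (n₁ * m)) (Fin (n₂ * m)) F}
    (hΦ : ∀ (x : Fin n → E) (r : Fin n₁) (c : Fin n₂) (u v : Fin m),
      Φ x (finIdx r u) (finIdx c v) = ρ (x (Fin.cast hn (finIdx r c))) u v)
    {c c' : Fin n → E} {e e' : Matrix (Fin (n₁ * m)) (Fin (n₂ * m)) F}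
    (h : Φ c + e = Φ c' + e') :
    hammingDist c c' ≤ #(blockSupport e ∪ blockSupport e') := by
  subst hn
  refine card_le_card_of_surjOn (fun rc => finIdx rc.1 rc.2) fun t ht => ?_
  refine ⟨(t.divNat, t.modNat), ?_, finIdx_divNat_modNat t⟩
  by_contra hrc
  simp only [blockSupport, coe_union, Set.mem_union, mem_coe, mem_filter, mem_univ, true_and,
    not_or, not_exists, not_not] at hrc
  refine (mem_filter.1 ht).2 (hρ (Matrix.ext fun u v => ?_))
  simpa [hΦ, hrc.1 u v, hrc.2 u v, finIdx_divNat_modNat] using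
    congr_fun₂ h (finIdx t.divNat u) (finIdx t.modNat v)

end Blocks

theorem regular_expansion_corrects_single_square_burst_general
    {F E : Type*} [Field F]
    [Field E] [Algebra F E] [DecidableEq E]
    (m n n₁ n₂ k : ℕ) (b : Module.Basis (Fin m) F E)
    (ρ : E → Matrix (Fin m) (Fin m) F)
    (hρ : ρ = fun a => LinearMap.toMatrix b b (LinearMap.mulLeft F a))
    (hn : n₁ * n₂ = n)
    (Φ₂ : (Fin n → E) → Matrix (Fin (n₁ * m)) (Fin (n₂ * m)) F)
    (hΦ : ∀ (x : Fin n → E) (r : Fin n₁) (c : Fin n₂) (u v : Fin m),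
      Φ₂ x (finIdx r u) (finIdx c v) = ρ (x (Fin.cast hn (finIdx r c))) u v)
    (hsq : 1 ≤ Nat.sqrt ((n - k) / 2))
    (C : Set (Fin n → E))
    (hC : ∀ c ∈ C, ∀ c' ∈ C, c ≠ c' → n - k + 1 ≤ hammingDist c c') :
    ∀ c ∈ C, ∀ c' ∈ C, ∀ e e' : Matrix (Fin (n₁ * m)) (Fin (n₂ * m)) F,
      IsSquareBurst (m * (Nat.sqrt ((n - k) / 2) - 1) + 1) e →
      IsSquareBurst (m * (Nat.sqrt ((n - k) / 2) - 1) + 1) e' →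
      Φ₂ c + e = Φ₂ c' + e' → c = c' := by
  intro c hc c' hc' e e' he he' h
  by_contra hne
  set s := Nat.sqrt ((n - k) / 2)
  have hρ_inj : Function.Injective ρ := hρ ▸ Algebra.leftMulMatrix_injective b
  have hs : s - 1 + 1 = s := Nat.sub_add_cancel hsq
  have hcard := card_blockSupport_le he
  have hcard' := card_blockSupport_le he'
  rw [hs] at hcard hcard'
  refine Nat.not_succ_le_self (n - k) ?_
  calc n - k + 1 ≤ hammingDist c c' := hC c hc c' hc' hne
    _ ≤ #(blockSupport e ∪ blockSupport e') :=
      hammingDist_le_card_blockSupport_union hρ_inj hn hΦ h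
    _ ≤ #(blockSupport e) + #(blockSupport e') := card_union_le _ _
    _ ≤ s ^ 2 + s ^ 2 := Nat.add_le_add hcard hcard'
    _ ≤ n - k := by
      have : s ^ 2 ≤ (n - k) / 2 := Nat.sqrt_le' _
      omega

/-- The two-dimensional expansion via the regular representation
`ρ : E → Mat_{m×m}(F)` (matrix of multiplication by `a` w.r.t. a fixed basis `b`)
of a code `C ⊆ E^n` of minimum distance at least `n - k + 1` corrects any single
square burst of side at most `x = m(⌊√⌊(n-k)/2⌋⌋ - 1) + 1`. -/
theorem regular_expansion_corrects_single_square_burst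
    {F E : Type*} [Field F] [Fintype F] [DecidableEq F]
    [Field E] [Algebra F E] [DecidableEq E]
    (m n n₁ n₂ k : ℕ) (b : Module.Basis (Fin m) F E)
    (ρ : E → Matrix (Fin m) (Fin m) F)
    (hρ : ρ = fun a => LinearMap.toMatrix b b (LinearMap.mulLeft F a))
    (hn₁ : 0 < n₁) (hn₂ : 0 < n₂) (hn : n₁ * n₂ = n)
    (Φ₂ : (Fin n → E) → Matrix (Fin (n₁ * m)) (Fin (n₂ * m)) F)
    (hΦ : ∀ (x : Fin n → E) (r : Fin n₁) (c : Fin n₂) (u v : Fin m),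
      Φ₂ x (finIdx r u) (finIdx c v) = ρ (x (Fin.cast hn (finIdx r c))) u v)
    (hk : 0 < k) (hkn : k < n)
    (hsq : 1 ≤ Nat.sqrt ((n - k) / 2))
    (C : Set (Fin n → E))
    (hC : ∀ c ∈ C, ∀ c' ∈ C, c ≠ c' → n - k + 1 ≤ hammingDist c c') :
    ∀ c ∈ C, ∀ c' ∈ C, ∀ e e' : Matrix (Fin (n₁ * m)) (Fin (n₂ * m)) F,
      IsSquareBurst (m * (Nat.sqrt ((n - k) / 2) - 1) + 1) e →
      IsSquareBurst (m * (Nat.sqrt ((n - k) / 2) - 1) + 1) e' →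
      Φ₂ c + e = Φ₂ c' + e' → c = c' :=
  regular_expansion_corrects_single_square_burst_general m n n₁ n₂ k b ρ hρ hn Φ₂ hΦ hsq C hC
end

section
/- Let F_q be a finite field, E a field extension of F_q of degree m, ρ : E → Mat_{m×m}(F_q) the regular representation (a ↦ matrix of multiplication by a), n₁n₂ = n, and Φ₂ : E^n → (n₁m × n₂m matrices over F_q) the induced two-dimensional expansion. Let 0 < k < n, set t = ⌊(n−k)/2⌋ and assume t ≥ 1, and let C ⊆ E^n have minimum Hamming distance at least n−k+1. Then Φ₂(C) corrects any single one-dimensional burst of length at most m(t−1)+1: for all c, c′ ∈ C and all e, e′ whose supports are each contained either in a single row within m(t−1)+1 contiguous columns or in a single column within m(t−1)+1 contiguous rows, Φ₂(c) + e = Φ₂(c′) + e′ implies c = c′. -/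
/-- A one-dimensional burst of length (at most) `L` in a matrix: the support lies in
a single row within `L` contiguous columns, or in a single column within `L`
contiguous rows. -/
def IsLineBurst {F : Type*} [Zero F] {R C : ℕ} (L : ℕ) (e : Matrix (Fin R) (Fin C) F) : Prop :=
  (∃ r p : ℕ, ∀ i j, e i j ≠ 0 → (i : ℕ) = r ∧ p ≤ (j : ℕ) ∧ (j : ℕ) < p + L) ∨
  (∃ c p : ℕ, ∀ i j, e i j ≠ 0 → (j : ℕ) = c ∧ p ≤ (i : ℕ) ∧ (i : ℕ) < p + L)

theorem finIdx_val_div {n m : ℕ} (i : Fin n) (j : Fin m) : (finIdx i j : ℕ) / m = i := by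
  have hm : 0 < m := j.pos
  simp only [finIdx]
  rw [Nat.add_comm, Nat.add_mul_div_right _ _ hm, Nat.div_eq_of_lt j.2, Nat.zero_add]

theorem finIdx_divNat_modNat_s13 {n m : ℕ} (x : Fin (n * m)) : finIdx x.divNat x.modNat = x := by
  ext
  simp only [finIdx, Fin.coe_divNat, Fin.coe_modNat]
  exact Nat.div_add_mod' x m

theorem Nat.div_mem_Icc_of_le_of_lt {m p L j : ℕ} (hm : 0 < m) (hp : p ≤ j)
    (hj : j < p + (m * (L - 1) + 1)) :
    j / m ∈ Finset.Icc (p / m) (p / m + (L - 1)) := by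
  refine Finset.mem_Icc.mpr ⟨Nat.div_le_div_right hp, ?_⟩
  calc j / m ≤ (p + (L - 1) * m) / m := Nat.div_le_div_right (by rw [Nat.mul_comm] at hj; omega)
    _ = p / m + (L - 1) := Nat.add_mul_div_right p (L - 1) hm

theorem card_Icc_add_sub_one (a L : ℕ) (hL : 1 ≤ L) :
    (Finset.Icc a (a + (L - 1))).card = L := by
  rw [Nat.card_Icc]; omega

theorem IsLineBurst.exists_blocks_card_le {F : Type*} [Zero F] {R C m t : ℕ}
    {e : Matrix (Fin R) (Fin C) F} (he : IsLineBurst (m * (t - 1) + 1) e)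
    (hm : 0 < m) (ht : 1 ≤ t) :
    ∃ S : Finset (ℕ × ℕ), S.card ≤ t ∧ ∀ i j, e i j ≠ 0 → ((i : ℕ) / m, (j : ℕ) / m) ∈ S := by
  rcases he with ⟨r, p, hrow⟩ | ⟨c, p, hcol⟩
  · refine ⟨{r / m} ×ˢ Finset.Icc (p / m) (p / m + (t - 1)), by
      rw [Finset.card_product, card_Icc_add_sub_one _ _ ht, Finset.card_singleton, one_mul], ?_⟩
    intro i j hij
    obtain ⟨rfl, hp, hj⟩ := hrow i j hij
    exact Finset.mem_product.mpr
      ⟨Finset.mem_singleton_self _, Nat.div_mem_Icc_of_le_of_lt hm hp hj⟩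
  · refine ⟨Finset.Icc (p / m) (p / m + (t - 1)) ×ˢ {c / m}, by
      rw [Finset.card_product, card_Icc_add_sub_one _ _ ht, Finset.card_singleton, mul_one], ?_⟩
    intro i j hij
    obtain ⟨rfl, hp, hi⟩ := hcol i j hij
    exact Finset.mem_product.mpr
      ⟨Nat.div_mem_Icc_of_le_of_lt hm hp hi, Finset.mem_singleton_self _⟩

theorem hammingDist_le_card_of_divMod_mem {n d : ℕ} {β : Fin n → Type*}
    [∀ i, DecidableEq (β i)] {x y : ∀ i, β i} {S : Finset (ℕ × ℕ)}
    (h : ∀ i, x i ≠ y i → ((i : ℕ) / d, (i : ℕ) % d) ∈ S) :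
    hammingDist x y ≤ S.card := by
  refine Finset.card_le_card_of_injOn (fun i : Fin n => ((i : ℕ) / d, (i : ℕ) % d))
    (fun i hi => h i (Finset.mem_filter.mp hi).2) ?_
  intro i _ j _ hij
  simp only [Prod.mk.injEq] at hij
  exact Fin.ext (by rw [← Nat.div_add_mod i d, ← Nat.div_add_mod j d, hij.1, hij.2])

theorem exists_entry_ne_of_ne {F E : Type*} {m n n₁ n₂ : ℕ} {ρ : E → Matrix (Fin m) (Fin m) F}
    (hρ : Function.Injective ρ) (hn : n₁ * n₂ = n)
    {Φ₂ : (Fin n → E) → Matrix (Fin (n₁ * m)) (Fin (n₂ * m)) F}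
    (hΦ : ∀ (x : Fin n → E) (r : Fin n₁) (c : Fin n₂) (u v : Fin m),
      Φ₂ x (finIdx r u) (finIdx c v) = ρ (x (Fin.cast hn (finIdx r c))) u v)
    {x y : Fin n → E} {pos : Fin n} (h : x pos ≠ y pos) :
    ∃ i j, Φ₂ x i j ≠ Φ₂ y i j ∧ (i : ℕ) / m = pos / n₂ ∧ (j : ℕ) / m = pos % n₂ := by
  set p := Fin.cast hn.symm pos
  have hpos : Fin.cast hn (finIdx p.divNat p.modNat) = pos := by
    rw [finIdx_divNat_modNat_s13]; rfl
  obtain ⟨u, v, huv⟩ : ∃ u v, ρ (x pos) u v ≠ ρ (y pos) u v := by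
    by_contra! hall
    exact h (hρ (Matrix.ext hall))
  refine ⟨finIdx p.divNat u, finIdx p.modNat v, ?_, finIdx_val_div _ _, finIdx_val_div _ _⟩
  rwa [hΦ, hΦ, hpos]

theorem regular_expansion_corrects_single_line_burst_general
    {F E : Type*} [Field F] [Field E] [Algebra F E] [DecidableEq E]
    (m n n₁ n₂ k t : ℕ) (b : Module.Basis (Fin m) F E)
    (ρ : E → Matrix (Fin m) (Fin m) F)
    (hρ : ρ = fun a => LinearMap.toMatrix b b (LinearMap.mulLeft F a))
    (hn : n₁ * n₂ = n)
    (Φ₂ : (Fin n → E) → Matrix (Fin (n₁ * m)) (Fin (n₂ * m)) F)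
    (hΦ : ∀ (x : Fin n → E) (r : Fin n₁) (c : Fin n₂) (u v : Fin m),
      Φ₂ x (finIdx r u) (finIdx c v) = ρ (x (Fin.cast hn (finIdx r c))) u v)
    (ht : t = (n - k) / 2) (ht1 : 1 ≤ t)
    (C : Set (Fin n → E))
    (hC : ∀ c ∈ C, ∀ c' ∈ C, c ≠ c' → n - k + 1 ≤ hammingDist c c') :
    ∀ c ∈ C, ∀ c' ∈ C, ∀ e e' : Matrix (Fin (n₁ * m)) (Fin (n₂ * m)) F,
      IsLineBurst (m * (t - 1) + 1) e → IsLineBurst (m * (t - 1) + 1) e' →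
      Φ₂ c + e = Φ₂ c' + e' → c = c' := by
  intro c hc c' hc' e e' he he' heq
  by_contra hne
  have hm : 0 < m := b.index_nonempty.some.pos
  have hρ_inj : Function.Injective ρ := hρ ▸ Algebra.leftMulMatrix_injective b
  obtain ⟨S, hS, hSe⟩ := he.exists_blocks_card_le hm ht1
  obtain ⟨S', hS', hSe'⟩ := he'.exists_blocks_card_le hm ht1
  have hblocks : ∀ pos, c pos ≠ c' pos → ((pos : ℕ) / n₂, (pos : ℕ) % n₂) ∈ S ∪ S' := by
    intro pos hpos
    obtain ⟨i, j, hij, hi, hj⟩ := exists_entry_ne_of_ne hρ_inj hn hΦ hpos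
    rw [← hi, ← hj, Finset.mem_union]
    by_contra! hnot
    have he0 : e i j = 0 := not_not.mp fun h => hnot.1 (hSe i j h)
    have he0' : e' i j = 0 := not_not.mp fun h => hnot.2 (hSe' i j h)
    apply hij
    simpa [he0, he0'] using congrFun (congrFun heq i) j
  have hdist := (hC c hc c' hc' hne).trans (hammingDist_le_card_of_divMod_mem hblocks)
  have := Finset.card_union_le S S'
  omega

/-- The two-dimensional expansion via the regular representation
`ρ : E → Mat_{m×m}(F)` of a code `C ⊆ E^n` of minimum distance at least `n - k + 1`
corrects any single one-dimensional burst of length at most `m(t-1)+1`, where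
`t = ⌊(n-k)/2⌋ ≥ 1`. -/
theorem regular_expansion_corrects_single_line_burst
    {F E : Type*} [Field F] [Fintype F] [DecidableEq F]
    [Field E] [Algebra F E] [DecidableEq E]
    (m n n₁ n₂ k t : ℕ) (b : Module.Basis (Fin m) F E)
    (ρ : E → Matrix (Fin m) (Fin m) F)
    (hρ : ρ = fun a => LinearMap.toMatrix b b (LinearMap.mulLeft F a))
    (hn₁ : 0 < n₁) (hn₂ : 0 < n₂) (hn : n₁ * n₂ = n)
    (Φ₂ : (Fin n → E) → Matrix (Fin (n₁ * m)) (Fin (n₂ * m)) F)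
    (hΦ : ∀ (x : Fin n → E) (r : Fin n₁) (c : Fin n₂) (u v : Fin m),
      Φ₂ x (finIdx r u) (finIdx c v) = ρ (x (Fin.cast hn (finIdx r c))) u v)
    (hk : 0 < k) (hkn : k < n) (ht : t = (n - k) / 2) (ht1 : 1 ≤ t)
    (C : Set (Fin n → E))
    (hC : ∀ c ∈ C, ∀ c' ∈ C, c ≠ c' → n - k + 1 ≤ hammingDist c c') :
    ∀ c ∈ C, ∀ c' ∈ C, ∀ e e' : Matrix (Fin (n₁ * m)) (Fin (n₂ * m)) F,
      IsLineBurst (m * (t - 1) + 1) e → IsLineBurst (m * (t - 1) + 1) e' →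
      Φ₂ c + e = Φ₂ c' + e' → c = c' :=
  regular_expansion_corrects_single_line_burst_general m n n₁ n₂ k t b ρ hρ hn Φ₂ hΦ ht ht1 C hC
end
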